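/- Let 𝔗 be a nonempty set of total well-orderings on N that is closed in TO(N), and assume A is multiplicative on 𝔗. Then every left ideal L of A admits a 𝔗-universal Gröbner basis, i.e. a finite subset U ⊆ L that is a Gröbner basis of L with respect to every ≺ ∈ 𝔗. -/

import Mathlib

/-!
For each `≺ ∈ 𝔗`, Hilbert's basis theorem gives a finite `G_≺ ⊆ L` whose leading monomials
generate `LM_≺(L)`. The orderings under which every `g ∈ G_≺` keeps its leading monomial form an
open neighbourhood of `≺`, and `G_≺` stays a Gröbner basis for every well-ordering `≺'` in it on
which `A` is multiplicative: every nonzero `x ∈ L` still has a monomial divisible by some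
`LM_≺'(g)`, and cancelling the largest such monomial by a multiple of `g` shows, by well-founded
induction, that `LM_≺'(x)` itself is divisible. Since `TO(N)` is compact (a closed subspace of
`{0,1}^(N × N)`), finitely many of these neighbourhoods cover the closed set `𝔗`, and the union of
the corresponding `G_≺` is a `𝔗`-universal Gröbner basis.
-/
/-- A binary relation is a total ordering: antisymmetric, transitive, and total. -/
def IsTotalOrdering {S : Type*} (r : S → S → Prop) : Prop :=
  (∀ a b, r a b → r b a → a = b) ∧ (∀ a b c, r a b → r b c → r a c) ∧ (∀ a b, r a b ∨ r b a)

/-- The set `TO(S)` of all total orderings on `S`. -/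
def TO (S : Type*) : Type _ := {r : S → S → Prop // IsTotalOrdering r}

/-- The topology `𝒰(S)` on `TO(S)`, generated by the subbasis of all sets
`U_{(a,b)} = {≤ ∈ TO(S) : a ≤ b}`. -/
instance TOTopology (S : Type*) : TopologicalSpace (TO S) :=
  TopologicalSpace.generateFrom {U | ∃ a b : S, U = {r : TO S | r.1 a b}}
/-- Monomials of `K[X_1,…,X_t]`, identified with their exponent vectors `ν ∈ ℕ^t`. -/
abbrev Mon (t : ℕ) := Fin t →₀ ℕ

/-- `LM` is a leading-monomial function: for each total ordering `r` on monomials and each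
nonzero polynomial `p`, `LM r p` is the `r`-maximal element of the support of `p`. -/
def IsLM (K : Type*) [Field K] (t : ℕ)
    (LM : TO (Mon t) → MvPolynomial (Fin t) K → Mon t) : Prop :=
  ∀ (r : TO (Mon t)) (p : MvPolynomial (Fin t) K), p ≠ 0 →
    LM r p ∈ p.support ∧ ∀ m ∈ p.support, r.1 m (LM r p)

/-- The leading monomial ideal `LM_≤(E)` of a subset `E ⊆ K[X]`: the ideal generated by the
leading monomials of the nonzero elements of `E`. -/
noncomputable def LMideal (K : Type*) [Field K] (t : ℕ)
    (LM : TO (Mon t) → MvPolynomial (Fin t) K → Mon t)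
    (r : TO (Mon t)) (E : Set (MvPolynomial (Fin t) K)) : Ideal (MvPolynomial (Fin t) K) :=
  Ideal.span {q | ∃ e ∈ E, e ≠ 0 ∧ q = MvPolynomial.monomial (LM r e) (1 : K)}

/- `A` is an associative (not necessarily commutative) `K`-algebra and
`Φ : A ≃ₗ[K] K[X_1,…,X_t]` a `K`-module isomorphism, so `N = Φ⁻¹(M)` is a `K`-basis of `A`.
A total ordering `≺` on `N` is identified, via the bijection induced by `Φ`, with a total
ordering on the monomials of `K[X]`, i.e. on exponent vectors `Mon t`. -/

/-- The leading monomial ideal `LM_≺(H)` of a subset `H ⊆ A`: the ideal of `K[X]` generated by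
the leading monomials (the `≺`-maximal monomials of the support of `Φ(h)`) of the nonzero
elements `h ∈ H`. -/
noncomputable def LMAideal (K A : Type*) [Field K] [Ring A] [Algebra K A] (t : ℕ)
    (Φ : A ≃ₗ[K] MvPolynomial (Fin t) K)
    (LM : TO (Mon t) → MvPolynomial (Fin t) K → Mon t)
    (r : TO (Mon t)) (H : Set A) : Ideal (MvPolynomial (Fin t) K) :=
  Ideal.span {q | ∃ h ∈ H, h ≠ 0 ∧ q = MvPolynomial.monomial (LM r (Φ h)) (1 : K)}

/-- `A` is multiplicative on a set `𝔗` of total orderings: `A` is a domain and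
`LM_≺(a·b) = LM_≺(a)·LM_≺(b)` (i.e. addition of exponent vectors) for all nonzero
`a, b ∈ A` and all `≺ ∈ 𝔗`. -/
def MultOn (K A : Type*) [Field K] [Ring A] [Algebra K A] (t : ℕ)
    (Φ : A ≃ₗ[K] MvPolynomial (Fin t) K)
    (LM : TO (Mon t) → MvPolynomial (Fin t) K → Mon t)
    (T : Set (TO (Mon t))) : Prop :=
  (∀ a b : A, a ≠ 0 → b ≠ 0 → a * b ≠ 0) ∧
  (∀ r ∈ T, ∀ a b : A, a ≠ 0 → b ≠ 0 → LM r (Φ (a * b)) = LM r (Φ a) + LM r (Φ b))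

/-- A total ordering is a (total) well-ordering: every nonempty subset has a minimum. -/
def IsWO {S : Type*} (r : TO S) : Prop :=
  ∀ T : Set S, T.Nonempty → ∃ a ∈ T, ∀ b ∈ T, r.1 a b

open MvPolynomial

namespace TO

variable {S : Type*}

lemma refl (r : TO S) (a : S) : r.1 a a := (r.2.2.2 a a).elim id id

lemma antisymm (r : TO S) {a b : S} (hab : r.1 a b) (hba : r.1 b a) : a = b := r.2.1 a b hab hba

lemma trans (r : TO S) {a b c : S} (hab : r.1 a b) (hbc : r.1 b c) : r.1 a c :=
  r.2.2.1 a b c hab hbc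

lemma total (r : TO S) (a b : S) : r.1 a b ∨ r.1 b a := r.2.2.2 a b

lemma wellFounded_of_isWO {r : TO S} (h : IsWO r) : WellFounded fun a b => ¬ r.1 b a :=
  WellFounded.wellFounded_iff_has_min.2 fun s hs =>
    let ⟨m, hm, hmin⟩ := h s hs
    ⟨m, hm, fun x hx hxm => hxm (hmin x hx)⟩

lemma exists_max (r : TO S) {s : Finset S} (hs : s.Nonempty) : ∃ m ∈ s, ∀ x ∈ s, r.1 x m := by
  induction hs using Finset.Nonempty.cons_induction with
  | singleton a =>
    exact ⟨a, Finset.mem_singleton_self a, fun x hx => Finset.mem_singleton.1 hx ▸ r.refl a⟩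
  | cons a s ha hs ih =>
    obtain ⟨m, hm, hmax⟩ := ih
    rcases r.total a m with ham | hma
    · exact ⟨m, Finset.mem_cons_of_mem hm, (Finset.forall_mem_cons _ _).2 ⟨ham, hmax⟩⟩
    · exact ⟨a, Finset.mem_cons_self a s,
        (Finset.forall_mem_cons _ _).2 ⟨r.refl a, fun x hx => r.trans (hmax x hx) hma⟩⟩

lemma isOpen_setOf (a b : S) : IsOpen {r : TO S | r.1 a b} :=
  TopologicalSpace.GenerateOpen.basic _ ⟨a, b, rfl⟩

lemma isClosed_setOf_isTotalOrdering :
    IsClosed {f : S → S → Bool | IsTotalOrdering fun a b => f a b} := by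
  have hev : ∀ a b : S, Continuous fun f : S → S → Bool => f a b := fun a b => by fun_prop
  simp only [IsTotalOrdering, Set.ofPred_and, Set.ofPred_forall]
  refine .inter (isClosed_iInter fun a => isClosed_iInter fun b => ?_)
    (.inter (isClosed_iInter fun a => isClosed_iInter fun b => isClosed_iInter fun c => ?_)
      (isClosed_iInter fun a => isClosed_iInter fun b => ?_))
  · exact (isClosed_discrete {p : Bool × Bool | p.1 → p.2 → a = b}).preimage
      ((hev a b).prodMk (hev b a))
  · exact (isClosed_discrete {p : Bool × Bool × Bool | p.1 → p.2.1 → p.2.2}).preimage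
      ((hev a b).prodMk ((hev b c).prodMk (hev a c)))
  · exact (isClosed_discrete {p : Bool × Bool | p.1 ∨ p.2}).preimage ((hev a b).prodMk (hev b a))

instance compactSpace : CompactSpace (TO S) := by
  classical
  let C := {f : S → S → Bool | IsTotalOrdering fun a b => f a b}
  have : CompactSpace C := isCompact_iff_compactSpace.1 isClosed_setOf_isTotalOrdering.isCompact
  let d : C → TO S := fun f => ⟨fun a b => f.1 a b, f.2⟩
  have hd : Continuous d := continuous_generateFrom_iff.2 <| by
    rintro _ ⟨a, b, rfl⟩
    exact (isOpen_discrete ({true} : Set Bool)).preimage (f := fun f : C => f.1 a b)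
      ((continuous_apply b).comp ((continuous_apply a).comp continuous_subtype_val))
  have hsurj : Function.Surjective d := fun r =>
    ⟨⟨fun a b => decide (r.1 a b), by simpa [C] using r.2⟩, Subtype.ext <| by funext a b; simp [d]⟩
  exact ⟨by simpa [hsurj.range_eq] using isCompact_range hd⟩

end TO

namespace IsLM

variable {K : Type*} [Field K] {t : ℕ} {LM : TO (Mon t) → MvPolynomial (Fin t) K → Mon t}

lemma mem_support (hLM : IsLM K t LM) (r : TO (Mon t)) {p : MvPolynomial (Fin t) K} (hp : p ≠ 0) :
    LM r p ∈ p.support :=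
  (hLM r p hp).1

lemma le (hLM : IsLM K t LM) (r : TO (Mon t)) {p : MvPolynomial (Fin t) K} (hp : p ≠ 0)
    {m : Mon t} (hm : m ∈ p.support) : r.1 m (LM r p) :=
  (hLM r p hp).2 m hm

lemma eq_of_forall_le (hLM : IsLM K t LM) (r : TO (Mon t)) {p : MvPolynomial (Fin t) K}
    (hp : p ≠ 0) {μ : Mon t} (hμ : μ ∈ p.support) (hle : ∀ m ∈ p.support, r.1 m μ) :
    LM r p = μ :=
  r.antisymm (hle _ (hLM.mem_support r hp)) (hLM.le r hp hμ)

lemma monomial (hLM : IsLM K t LM) (r : TO (Mon t)) (ν : Mon t) {c : K} (hc : c ≠ 0) :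
    LM r (monomial ν c) = ν := by
  classical
  refine hLM.eq_of_forall_le r (by simpa using hc) (by simp [support_monomial, hc]) ?_
  intro m hm
  rw [Finset.mem_singleton.1 (support_monomial_subset hm)]
  exact r.refl ν

end IsLM

lemma MultOn.mono {K A : Type*} [Field K] [Ring A] [Algebra K A] {t : ℕ}
    {Φ : A ≃ₗ[K] MvPolynomial (Fin t) K} {LM : TO (Mon t) → MvPolynomial (Fin t) K → Mon t}
    {T T' : Set (TO (Mon t))} (h : MultOn K A t Φ LM T) (hT' : T' ⊆ T) : MultOn K A t Φ LM T' :=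
  ⟨h.1, fun r hr => h.2 r (hT' hr)⟩

section GroebnerBasis

variable {K A : Type*} [Field K] [Ring A] [Algebra K A] {t : ℕ}
  {Φ : A ≃ₗ[K] MvPolynomial (Fin t) K} {LM : TO (Mon t) → MvPolynomial (Fin t) K → Mon t}
  {r : TO (Mon t)} {L : Submodule A A} {G : Finset A}

lemma exists_coeff_mul_eq (hLM : IsLM K t LM) (hmult : MultOn K A t Φ LM {r}) {g : A}
    (hg : g ≠ 0) {ν : Mon t} (hν : LM r (Φ g) ≤ ν) (c : K) :
    ∃ b : A, coeff ν (Φ (b * g)) = c ∧ ∀ m ∈ (Φ (b * g)).support, r.1 m ν := by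
  obtain ⟨δ, rfl⟩ := le_iff_exists_add.1 hν
  set b := Φ.symm (monomial δ (1 : K))
  have hb : b ≠ 0 := by simp [b]
  have hbg : Φ (b * g) ≠ 0 := by simpa using hmult.1 b g hb hg
  have hlm : LM r (Φ (b * g)) = LM r (Φ g) + δ := by
    rw [hmult.2 r rfl b g hb hg, Φ.apply_symm_apply, hLM.monomial r δ one_ne_zero, add_comm]
  have hd : coeff (LM r (Φ g) + δ) (Φ (b * g)) ≠ 0 :=
    mem_support_iff.1 (hlm ▸ hLM.mem_support r hbg)
  refine ⟨(c / coeff (LM r (Φ g) + δ) (Φ (b * g))) • b, ?_, fun m hm => ?_⟩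
  · rw [smul_mul_assoc, map_smul, coeff_smul, smul_eq_mul, div_mul_cancel₀ _ hd]
  · rw [smul_mul_assoc, map_smul] at hm
    exact hlm ▸ hLM.le r hbg (support_smul hm)

lemma coeff_sub_of_not_le {x y : A} {ν m : Mon t} (hy : ∀ m ∈ (Φ y).support, r.1 m ν)
    (hm : ¬ r.1 m ν) : coeff m (Φ (x - y)) = coeff m (Φ x) := by
  rw [map_sub, coeff_sub, notMem_support_iff.1 (fun h => hm (hy m h)), sub_zero]

variable (Φ LM r) in
/-- For `G ⊆ L \ {0}` this says `LM_r(L) = LM_r(G)`. -/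
def LMGenerates (G : Finset A) (L : Submodule A A) : Prop :=
  ∀ x ∈ L, x ≠ 0 → ∃ g ∈ G, LM r (Φ g) ≤ LM r (Φ x)

lemma LMGenerates.mono {U : Finset A} (h : LMGenerates Φ LM r G L) (hGU : G ⊆ U) :
    LMGenerates Φ LM r U L := fun x hx hx0 =>
  let ⟨g, hg, hle⟩ := h x hx hx0
  ⟨g, hGU hg, hle⟩

lemma LMGenerates.lmAideal_eq (h : LMGenerates Φ LM r G L) (hG : (G : Set A) ⊆ (L : Set A) \ {0}) :
    LMAideal K A t Φ LM r L = LMAideal K A t Φ LM r G := by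
  refine le_antisymm (Ideal.span_le.2 ?_) (Ideal.span_mono ?_)
  · rintro _ ⟨x, hx, hx0, rfl⟩
    obtain ⟨g, hg, hle⟩ := h x hx hx0
    obtain ⟨δ, hδ⟩ := le_iff_exists_add.1 hle
    have hgen : monomial (LM r (Φ g)) (1 : K) ∈ LMAideal K A t Φ LM r G :=
      Ideal.subset_span ⟨g, hg, (hG hg).2, rfl⟩
    rw [hδ, add_comm, ← mul_one (1 : K), ← monomial_mul]
    exact Ideal.mul_mem_left _ _ hgen
  · rintro _ ⟨x, hx, hx0, rfl⟩
    exact ⟨x, (hG hx).1, hx0, rfl⟩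

lemma LMGenerates.le_span (hLM : IsLM K t LM) (hwo : IsWO r) (hmult : MultOn K A t Φ LM {r})
    (hG : (G : Set A) ⊆ (L : Set A) \ {0}) (h : LMGenerates Φ LM r G L) :
    L ≤ Submodule.span A G := by
  suffices H : ∀ ν, ∀ x ∈ L, x ≠ 0 → LM r (Φ x) = ν → x ∈ Submodule.span A G by
    intro x hx
    by_cases hx0 : x = 0
    · exact hx0 ▸ zero_mem _
    · exact H _ x hx hx0 rfl
  intro ν
  induction ν using (TO.wellFounded_of_isWO hwo).induction with | _ ν ih => ?_
  rintro x hxL hx0 rfl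
  obtain ⟨g, hgG, hgx⟩ := h x hxL hx0
  obtain ⟨b, hcoeff, hsupp⟩ :=
    exists_coeff_mul_eq hLM hmult (hG hgG).2 hgx (coeff (LM r (Φ x)) (Φ x))
  rw [← sub_add_cancel x (b * g)]
  refine add_mem ?_ (Submodule.smul_mem _ b (Submodule.subset_span hgG))
  by_cases hx'0 : x - b * g = 0
  · exact hx'0 ▸ zero_mem _
  refine ih _ ?_ _ (sub_mem hxL (L.smul_mem b (hG hgG).1)) hx'0 rfl
  have hΦx' : Φ (x - b * g) ≠ 0 := Φ.map_ne_zero_iff.2 hx'0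
  have hμ := hLM.mem_support r hΦx'
  have hμx : r.1 (LM r (Φ (x - b * g))) (LM r (Φ x)) := by
    by_contra hgt
    rw [mem_support_iff, coeff_sub_of_not_le hsupp hgt] at hμ
    exact hgt (hLM.le r (Φ.map_ne_zero_iff.2 hx0) (mem_support_iff.2 hμ))
  intro hxμ
  rw [r.antisymm hμx hxμ, mem_support_iff, map_sub, coeff_sub, hcoeff, sub_self] at hμ
  exact hμ rfl

open Classical in
variable (Φ LM r) in
noncomputable def reducibleSupport (G : Finset A) (x : A) : Finset (Mon t) :=
  (Φ x).support.filter fun ξ => ∃ g ∈ G, LM r (Φ g) ≤ ξ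

/-- Cancelling the largest reducible monomial `ν` of `x` by a multiple of some `g ∈ G` leaves the
monomials above `ν` untouched and makes the largest reducible monomial smaller. -/
lemma forall_support_le_of_max_reducible (hLM : IsLM K t LM) (hwo : IsWO r)
    (hmult : MultOn K A t Φ LM {r}) (hG : (G : Set A) ⊆ (L : Set A) \ {0})
    (H : ∀ x ∈ L, x ≠ 0 → (reducibleSupport Φ LM r G x).Nonempty) (ν : Mon t) :
    ∀ x ∈ L, ν ∈ reducibleSupport Φ LM r G x → (∀ ξ ∈ reducibleSupport Φ LM r G x, r.1 ξ ν) →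
      ∀ μ ∈ (Φ x).support, r.1 μ ν := by
  induction ν using (TO.wellFounded_of_isWO hwo).induction with | _ ν ih => ?_
  intro x hxL hνD hmax μ hμ
  by_contra hμν
  obtain ⟨hνx, g, hgG, hgν⟩ := Finset.mem_filter.1 hνD
  obtain ⟨b, hcoeff, hsupp⟩ := exists_coeff_mul_eq hLM hmult (hG hgG).2 hgν (coeff ν (Φ x))
  have hx'L : x - b * g ∈ L := sub_mem hxL (L.smul_mem b (hG hgG).1)
  have hμ' : μ ∈ (Φ (x - b * g)).support := by
    rwa [mem_support_iff, coeff_sub_of_not_le hsupp hμν, ← mem_support_iff]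
  have hν' : coeff ν (Φ (x - b * g)) = 0 := by rw [map_sub, coeff_sub, hcoeff, sub_self]
  obtain ⟨ν', hν'D, hmax'⟩ := r.exists_max (H _ hx'L (by rintro h; simp [h] at hμ'))
  obtain ⟨hν'x', hν'dvd⟩ := Finset.mem_filter.1 hν'D
  have hν'ν : r.1 ν' ν := by
    by_contra hgt
    rw [mem_support_iff, coeff_sub_of_not_le hsupp hgt, ← mem_support_iff] at hν'x'
    exact hgt (hmax ν' (Finset.mem_filter.2 ⟨hν'x', hν'dvd⟩))
  have hlt : ¬ r.1 ν ν' := fun hνν' => mem_support_iff.1 hν'x' (r.antisymm hνν' hν'ν ▸ hν')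
  exact hμν (r.trans (ih ν' hlt _ hx'L hν'D hmax' μ hμ') hν'ν)

lemma lmGenerates_of_reducibleSupport_nonempty (hLM : IsLM K t LM) (hwo : IsWO r)
    (hmult : MultOn K A t Φ LM {r}) (hG : (G : Set A) ⊆ (L : Set A) \ {0})
    (H : ∀ x ∈ L, x ≠ 0 → (reducibleSupport Φ LM r G x).Nonempty) :
    LMGenerates Φ LM r G L := by
  intro x hx hx0
  obtain ⟨ν, hνD, hmax⟩ := r.exists_max (H x hx hx0)
  obtain ⟨hνx, g, hgG, hgν⟩ := Finset.mem_filter.1 hνD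
  have hΦx := Φ.map_ne_zero_iff.2 hx0
  have hν : ν = LM r (Φ x) := r.antisymm (hLM.le r hΦx hνx)
    (forall_support_le_of_max_reducible hLM hwo hmult hG H ν x hx hνD hmax _
      (hLM.mem_support r hΦx))
  exact ⟨g, hgG, hν ▸ hgν⟩

variable (Φ LM r) in
/-- The orderings under which each element of `G` keeps its `r`-leading monomial. -/
def lmNbhd (G : Finset A) : Set (TO (Mon t)) :=
  {r' | ∀ g ∈ G, ∀ m ∈ (Φ g).support, r'.1 m (LM r (Φ g))}

lemma isOpen_lmNbhd : IsOpen (lmNbhd Φ LM r G) := by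
  simp only [lmNbhd, Set.ofPred_forall]
  exact isOpen_biInter_finset fun g _ => isOpen_biInter_finset fun m _ => TO.isOpen_setOf _ _

lemma mem_lmNbhd_self (hLM : IsLM K t LM) (hG : (0 : A) ∉ G) : r ∈ lmNbhd Φ LM r G :=
  fun _ hg _ hm => hLM.le r (Φ.map_ne_zero_iff.2 fun hg0 => hG (hg0 ▸ hg)) hm

lemma LMGenerates.of_mem_lmNbhd (hLM : IsLM K t LM) {r' : TO (Mon t)} (hwo' : IsWO r')
    (hmult' : MultOn K A t Φ LM {r'}) (hG : (G : Set A) ⊆ (L : Set A) \ {0})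
    (h : LMGenerates Φ LM r G L) (hr' : r' ∈ lmNbhd Φ LM r G) : LMGenerates Φ LM r' G L := by
  refine lmGenerates_of_reducibleSupport_nonempty hLM hwo' hmult' hG fun x hx hx0 => ?_
  obtain ⟨g, hg, hle⟩ := h x hx hx0
  have hΦg : Φ g ≠ 0 := Φ.map_ne_zero_iff.2 (hG hg).2
  have hlm : LM r' (Φ g) = LM r (Φ g) :=
    hLM.eq_of_forall_le r' hΦg (hLM.mem_support r hΦg) (hr' g hg)
  exact ⟨_, Finset.mem_filter.2 ⟨hLM.mem_support r (Φ.map_ne_zero_iff.2 hx0), g, hg, hlm ▸ hle⟩⟩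

variable (Φ LM) in
lemma exists_lmGenerates (r : TO (Mon t)) (L : Submodule A A) :
    ∃ G : Finset A, (G : Set A) ⊆ (L : Set A) \ {0} ∧ LMGenerates Φ LM r G L := by
  classical
  let J : Finset A → Ideal (MvPolynomial (Fin t) K) := fun G =>
    Ideal.span ((fun s => monomial s (1 : K)) '' ((fun g => LM r (Φ g)) '' G))
  obtain ⟨_, ⟨G, hG, rfl⟩, hmax⟩ := set_has_maximal_iff_noetherian.2 inferInstance
    (J '' {G | (G : Set A) ⊆ (L : Set A) \ {0}}) ⟨J ∅, ∅, by simp, rfl⟩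
  refine ⟨G, hG, fun x hx hx0 => ?_⟩
  have hJ : J G = J (insert x G) :=
    eq_of_le_of_not_lt (Ideal.span_mono (by gcongr; exact Finset.subset_insert x G))
      (hmax _ ⟨insert x G, by simpa [Set.insert_subset_iff] using ⟨⟨hx, hx0⟩, hG⟩, rfl⟩)
  have hxJ : monomial (LM r (Φ x)) (1 : K) ∈ J G :=
    hJ ▸ Ideal.subset_span ⟨_, ⟨x, by simp, rfl⟩, rfl⟩
  obtain ⟨_, ⟨g, hg, rfl⟩, hle⟩ :=
    mem_ideal_span_monomial_image.1 hxJ (LM r (Φ x)) (by simp [support_monomial])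
  exact ⟨g, hg, hle⟩

end GroebnerBasis

theorem exists_universal_groebner_basis_general (K A : Type*) [Field K] [Ring A] [Algebra K A]
    (t : ℕ)
    (Φ : A ≃ₗ[K] MvPolynomial (Fin t) K)
    (LM : TO (Mon t) → MvPolynomial (Fin t) K → Mon t) (hLM : IsLM K t LM)
    (T : Set (TO (Mon t))) (hTne : T.Nonempty) (hTWO : ∀ r ∈ T, IsWO r)
    (hTclosed : IsClosed T)
    (hmult : MultOn K A t Φ LM T)
    (L : Submodule A A) :
    ∃ U : Finset A, (U : Set A) ⊆ (L : Set A) ∧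
      L = Submodule.span A (U : Set A) ∧
      ∀ r ∈ T, LMAideal K A t Φ LM r (L : Set A) = LMAideal K A t Φ LM r (U : Set A) := by
  classical
  choose G hGL hG using fun r : T => exists_lmGenerates Φ LM r.1 L
  obtain ⟨s, hs⟩ := hTclosed.isCompact.elim_finite_subcover (fun r : T => lmNbhd Φ LM r.1 (G r))
    (fun _ => isOpen_lmNbhd)
    (fun r hr => Set.mem_iUnion.2 ⟨⟨r, hr⟩, mem_lmNbhd_self hLM fun h0 => (hGL ⟨r, hr⟩ h0).2 rfl⟩)
  let U := s.biUnion G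
  have hUL : (U : Set A) ⊆ (L : Set A) \ {0} := by
    simpa [U, Set.iUnion₂_subset_iff] using fun i _ => hGL i
  have hUgen : ∀ r ∈ T, LMGenerates Φ LM r U L := by
    intro r hr
    obtain ⟨i, hi, hri⟩ := Set.mem_iUnion₂.1 (hs hr)
    exact ((hG i).of_mem_lmNbhd hLM (hTWO r hr) (hmult.mono (Set.singleton_subset_iff.2 hr))
      (hGL i) hri).mono (Finset.subset_biUnion_of_mem G hi)
  obtain ⟨r₀, hr₀⟩ := hTne
  refine ⟨U, fun u hu => (hUL hu).1, le_antisymm ?_ (Submodule.span_le.2 fun u hu => (hUL hu).1),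
    fun r hr => (hUgen r hr).lmAideal_eq hUL⟩
  exact (hUgen r₀ hr₀).le_span hLM (hTWO r₀ hr₀) (hmult.mono (Set.singleton_subset_iff.2 hr₀)) hUL

/-- Let `𝔗` be a nonempty set of total well-orderings on `N` that is closed in `TO(N)`, and
assume `A` is multiplicative on `𝔗`. Then every left ideal `L` of `A` admits a `𝔗`-universal
Gröbner basis: a finite subset `U ⊆ L` such that, for every `≺ ∈ 𝔗`, `U` is a Gröbner basis of
`L` with respect to `≺`, i.e. `L = Σ_{u ∈ U} A·u` and `LM_≺(L) = LM_≺(U)`. -/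
theorem exists_universal_groebner_basis (K A : Type*) [Field K] [Ring A] [Algebra K A]
    (t : ℕ) (ht : 1 ≤ t)
    (Φ : A ≃ₗ[K] MvPolynomial (Fin t) K)
    (LM : TO (Mon t) → MvPolynomial (Fin t) K → Mon t) (hLM : IsLM K t LM)
    (T : Set (TO (Mon t))) (hTne : T.Nonempty) (hTWO : ∀ r ∈ T, IsWO r)
    (hTclosed : IsClosed T)
    (hmult : MultOn K A t Φ LM T)
    (L : Submodule A A) :
    ∃ U : Finset A, (U : Set A) ⊆ (L : Set A) ∧
      L = Submodule.span A (U : Set A) ∧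
      ∀ r ∈ T, LMAideal K A t Φ LM r (L : Set A) = LMAideal K A t Φ LM r (U : Set A) :=
  exists_universal_groebner_basis_general K A t Φ LM hLM T hTne hTWO hTclosed hmult L
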